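/- arXiv:2105.07487 — 9 statements merged into one kernel-verified Lean document; each statement's English description precedes it below -/
import Mathlib

section
/- Let γ > 0. For every τ ∈ ℝ the function p ↦ e^{ipτ} · p²/(p⁴ + γ⁴) is integrable on ℝ, and (1/(2π)) ∫_ℝ e^{ipτ} · p²/(p⁴ + γ⁴) dp = (1/(2γ)) · e^{−γ|τ|/√2} · sin(π/4 − γ|τ|/√2). -/
/-!
Put `a = γ e^{iπ/4}`, so that `a² = iγ²` and `Re a > 0`. Partial fractions give
`p²/(p⁴ + γ⁴) = (1/(p² + a²) + 1/(p² + ā²))/2`. For `Re a > 0` the function `2a/(a² + p²)` is the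
Fourier transform of the two-sided exponential `e^{-a|t|}` (after the rescaling `p = 2πξ`), so
Fourier inversion gives `∫ e^{ipτ}/(p² + a²) dp = (π/a) e^{-a|τ|}`. The conjugate terms combine,
so the integral is `π · Re(e^{-a|τ|}/a)`, and the phase `e^{-iπ/4}` of `1/a` turns the cosine of
that real part into `sin(π/4 - γ|τ|/√2)`.
-/

open MeasureTheory Complex Set
open scoped FourierTransform ComplexConjugate Real

theorem cexp_neg_mul_abs_of_nonpos (a : ℂ) {t : ℝ} (ht : t ≤ 0) :
    cexp (-(a * |t|)) = cexp (a * t) := by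
  rw [abs_of_nonpos ht]
  push_cast
  ring_nf

theorem cexp_neg_mul_abs_of_pos (a : ℂ) {t : ℝ} (ht : 0 < t) :
    cexp (-(a * |t|)) = cexp (-a * t) := by
  rw [abs_of_pos ht]
  ring_nf

theorem integrable_cexp_neg_mul_abs {a : ℂ} (ha : 0 < a.re) :
    Integrable (fun t : ℝ => cexp (-(a * |t|))) := by
  rw [← integrableOn_univ, ← Iic_union_Ioi (a := (0 : ℝ))]
  refine IntegrableOn.union ?_ ?_
  · exact (integrableOn_exp_mul_complex_Iic ha 0).congr_fun
      (fun t ht => (cexp_neg_mul_abs_of_nonpos a ht).symm) measurableSet_Iic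
  · exact (integrableOn_exp_mul_complex_Ioi (by simpa using ha) 0).congr_fun
      (fun t ht => (cexp_neg_mul_abs_of_pos a ht).symm) measurableSet_Ioi

theorem fourier_cexp_neg_mul_abs {a : ℂ} (ha : 0 < a.re) (ξ : ℝ) :
    𝓕 (fun t : ℝ => cexp (-(a * |t|))) ξ = 2 * a / (a ^ 2 + (2 * π * ξ) ^ 2) := by
  set b : ℂ := 2 * π * ξ * I
  have hb_re : b.re = 0 := by simp [b]
  have hre_sub : 0 < (a - b).re := by simpa [hb_re] using ha
  have hre_add : (-(a + b)).re < 0 := by simpa [hb_re] using ha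
  have h_left : EqOn (fun t : ℝ => cexp (↑(-2 * π * t * ξ) * I) • cexp (-(a * |t|)))
      (fun t : ℝ => cexp ((a - b) * t)) (Iic 0) := fun t ht => by
    simp only [smul_eq_mul]
    rw [cexp_neg_mul_abs_of_nonpos a ht, ← Complex.exp_add]
    simp only [b]
    push_cast
    ring_nf
  have h_right : EqOn (fun t : ℝ => cexp (↑(-2 * π * t * ξ) * I) • cexp (-(a * |t|)))
      (fun t : ℝ => cexp (-(a + b) * t)) (Ioi 0) := fun t ht => by
    simp only [smul_eq_mul]
    rw [cexp_neg_mul_abs_of_pos a ht, ← Complex.exp_add]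
    simp only [b]
    push_cast
    ring_nf
  rw [Real.fourier_real_eq_integral_exp_smul, ← intervalIntegral.integral_Iic_add_Ioi
      ((integrableOn_exp_mul_complex_Iic hre_sub 0).congr_fun h_left.symm measurableSet_Iic)
      ((integrableOn_exp_mul_complex_Ioi hre_add 0).congr_fun h_right.symm measurableSet_Ioi),
    setIntegral_congr_fun measurableSet_Iic h_left, setIntegral_congr_fun measurableSet_Ioi h_right,
    integral_exp_mul_complex_Iic hre_sub, integral_exp_mul_complex_Ioi hre_add]
  have hsub : a - b ≠ 0 := fun h => by simp [h] at hre_sub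
  have hadd : a + b ≠ 0 := fun h => by simp [h] at hre_add
  have hprod : a ^ 2 + (2 * π * ξ) ^ 2 = (a - b) * (a + b) := by
    linear_combination (2 * π * ξ : ℂ) ^ 2 * I_sq
  simp only [ofReal_zero, mul_zero, Complex.exp_zero]
  rw [hprod]
  field_simp
  ring

/-- `Re z ≤ ‖z‖` for `z = ā (p² + a²)`, whose real part is `Re a · (p² + ‖a‖²)`. -/
theorem re_mul_sq_add_norm_sq_le (a : ℂ) (p : ℝ) :
    a.re * (p ^ 2 + ‖a‖ ^ 2) ≤ ‖a‖ * ‖(p : ℂ) ^ 2 + a ^ 2‖ := by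
  have hconj : conj a * a ^ 2 = (normSq a : ℂ) * a := by
    rw [normSq_eq_conj_mul_self]
    ring
  have hre : (conj a * ((p : ℂ) ^ 2 + a ^ 2)).re = a.re * (p ^ 2 + ‖a‖ ^ 2) := by
    rw [mul_add, hconj]
    simp only [add_re, mul_re, conj_re, conj_im, ← ofReal_pow, ofReal_re, ofReal_im,
      normSq_eq_norm_sq, mul_zero, sub_zero, zero_mul]
    ring
  calc a.re * (p ^ 2 + ‖a‖ ^ 2) = (conj a * ((p : ℂ) ^ 2 + a ^ 2)).re := hre.symm
    _ ≤ ‖conj a * ((p : ℂ) ^ 2 + a ^ 2)‖ := re_le_norm _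
    _ = ‖a‖ * ‖(p : ℂ) ^ 2 + a ^ 2‖ := by rw [norm_mul, norm_conj]

theorem integrable_inv_ofReal_sq_add_sq {a : ℂ} (ha : 0 < a.re) :
    Integrable (fun p : ℝ => ((p : ℂ) ^ 2 + a ^ 2)⁻¹) := by
  have ha0 : 0 < ‖a‖ := lt_of_lt_of_le ha (re_le_norm a)
  have hmajorant : Integrable (fun p : ℝ => ‖a‖ / a.re * (p ^ 2 + ‖a‖ ^ 2)⁻¹) := by
    refine (integrable_inv_one_add_sq.comp_div ha0.ne').const_mul (‖a‖ / a.re / ‖a‖ ^ 2) |>.congr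
      (.of_forall fun p => ?_)
    field_simp
    ring
  refine hmajorant.mono' (by fun_prop) (.of_forall fun p => ?_)
  have hpos : 0 < a.re * (p ^ 2 + ‖a‖ ^ 2) := by positivity
  calc ‖((p : ℂ) ^ 2 + a ^ 2)⁻¹‖ = ‖a‖ / (‖a‖ * ‖(p : ℂ) ^ 2 + a ^ 2‖) := by
        rw [norm_inv]
        field_simp
    _ ≤ ‖a‖ / (a.re * (p ^ 2 + ‖a‖ ^ 2)) :=
        div_le_div_of_nonneg_left ha0.le hpos (re_mul_sq_add_norm_sq_le a p)
    _ = ‖a‖ / a.re * (p ^ 2 + ‖a‖ ^ 2)⁻¹ := by field_simp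

theorem integral_cexp_mul_inv_ofReal_sq_add_sq {a : ℂ} (ha : 0 < a.re) (τ : ℝ) :
    ∫ p : ℝ, cexp (I * p * τ) * ((p : ℂ) ^ 2 + a ^ 2)⁻¹ = π / a * cexp (-(a * |τ|)) := by
  set g : ℝ → ℂ := fun t => cexp (-(a * |t|))
  have ha0 : a ≠ 0 := fun h => by simp [h] at ha
  have hFg : 𝓕 g = fun ξ : ℝ => 2 * a * (((2 * π * ξ : ℝ) : ℂ) ^ 2 + a ^ 2)⁻¹ := by
    ext ξ
    rw [fourier_cexp_neg_mul_abs ha]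
    push_cast
    ring
  have hFg_int : Integrable (𝓕 g) := by
    rw [hFg]
    exact ((integrable_inv_ofReal_sq_add_sq ha).comp_mul_left' (by positivity)).const_mul _
  have hinv : 𝓕⁻ (𝓕 g) τ = g τ :=
    (integrable_cexp_neg_mul_abs ha).fourierInv_fourier_eq hFg_int (by fun_prop)
  have hrescale : 𝓕⁻ (𝓕 g) τ =
      2 * a / (2 * π) * ∫ p : ℝ, cexp (I * p * τ) * ((p : ℂ) ^ 2 + a ^ 2)⁻¹ := by
    have hscale := Measure.integral_comp_mul_left
      (fun p : ℝ => cexp (I * p * τ) * ((p : ℂ) ^ 2 + a ^ 2)⁻¹) (2 * π)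
    rw [abs_of_pos (by positivity), real_smul] at hscale
    rw [Real.fourierInv_eq_fourier_neg, Real.fourier_real_eq_integral_exp_smul, hFg]
    simp only [smul_eq_mul]
    rw [div_eq_mul_inv, mul_assoc, ← ofReal_ofNat, ← ofReal_mul, ← ofReal_inv, ← hscale,
      ← integral_const_mul]
    congr 1 with v
    push_cast
    ring_nf
  rw [hrescale] at hinv
  rw [← mul_right_inj' (show 2 * a / (2 * π) ≠ 0 by simp [ha0, Real.pi_ne_zero]), hinv]
  field_simp
  rfl

theorem ofReal_sq_div_pow_four_add_pow_four {γ : ℝ} (hγ : γ ≠ 0) {a : ℂ}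
    (ha : a ^ 2 = γ ^ 2 * I) (p : ℝ) :
    (p : ℂ) ^ 2 / ((p : ℂ) ^ 4 + (γ : ℂ) ^ 4)
      = (((p : ℂ) ^ 2 + a ^ 2)⁻¹ + ((p : ℂ) ^ 2 + conj a ^ 2)⁻¹) / 2 := by
  have hconj : conj a ^ 2 = -(γ ^ 2 * I) := by
    rw [← map_pow, ha, map_mul, conj_I, ← ofReal_pow, conj_ofReal, mul_neg]
  have hplus : (p : ℂ) ^ 2 + γ ^ 2 * I ≠ 0 := fun h => by
    simpa [← ofReal_pow, hγ] using congrArg im h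
  have hminus : (p : ℂ) ^ 2 - γ ^ 2 * I ≠ 0 := fun h => by
    simpa [← ofReal_pow, hγ] using congrArg im h
  have hfactor : (p : ℂ) ^ 4 + (γ : ℂ) ^ 4
      = ((p : ℂ) ^ 2 + γ ^ 2 * I) * ((p : ℂ) ^ 2 - γ ^ 2 * I) := by
    linear_combination (γ : ℂ) ^ 4 * I_sq
  rw [ha, hconj, ← sub_eq_add_neg, hfactor]
  field_simp
  ring

noncomputable def gribovRoot (γ : ℝ) : ℂ := γ * cexp (π / 4 * I)

theorem gribovRoot_sq (γ : ℝ) : gribovRoot γ ^ 2 = γ ^ 2 * I := by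
  have h : ((2 : ℕ) : ℂ) * (π / 4 * I) = π / 2 * I := by
    push_cast
    ring
  rw [gribovRoot, mul_pow, ← Complex.exp_nat_mul, h, exp_pi_div_two_mul_I]

theorem gribovRoot_re_pos {γ : ℝ} (hγ : 0 < γ) : 0 < (gribovRoot γ).re := by
  rw [gribovRoot, re_ofReal_mul, ← ofReal_ofNat, ← ofReal_div, exp_ofReal_mul_I_re,
    Real.cos_pi_div_four]
  positivity

theorem re_cexp_neg_gribovRoot_mul_div_gribovRoot (γ r : ℝ) :
    (cexp (-(gribovRoot γ * r)) / gribovRoot γ).re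
      = Real.exp (-γ * r / √2) * Real.sin (π / 4 - γ * r / √2) / γ := by
  have hs : γ * (√2 / 2) * r = γ * r / √2 := by
    field_simp
    rw [Real.sq_sqrt zero_le_two]
  rw [gribovRoot, div_mul_eq_div_div_swap, ← Complex.exp_sub, div_ofReal_re, exp_re]
  simp only [sub_re, neg_re, mul_re, ofReal_re, exp_re, div_ofNat_re, I_re, mul_zero,
    div_ofNat_im, ofReal_im, zero_div, I_im, mul_one, sub_self, Real.exp_zero, mul_im, add_zero,
    Real.cos_pi_div_four, one_mul, exp_im, Real.sin_pi_div_four, zero_mul, sub_zero, sub_im,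
    neg_im, zero_add, neg_mul]
  rw [hs, ← Real.cos_neg, ← Real.cos_pi_div_two_sub]
  ring_nf

/-- Euclidean-time Schwinger function of the Gribov-type propagator
`D(p) = p²/(p⁴ + γ⁴)`: for `γ > 0` and `τ : ℝ`, the function
`p ↦ e^{ipτ} p²/(p⁴ + γ⁴)` is integrable on `ℝ`, and
`(1/(2π)) ∫ e^{ipτ} p²/(p⁴ + γ⁴) dp = (1/(2γ)) e^{−γ|τ|/√2} sin(π/4 − γ|τ|/√2)`. -/
theorem gribov_schwinger_function (γ : ℝ) (hγ : 0 < γ) (τ : ℝ) :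
    Integrable (fun p : ℝ =>
      Complex.exp (Complex.I * p * τ) * ((p : ℂ) ^ 2 / ((p : ℂ) ^ 4 + (γ : ℂ) ^ 4))) ∧
    ((1 / (2 * Real.pi) : ℝ) : ℂ) *
        (∫ p : ℝ, Complex.exp (Complex.I * p * τ) * ((p : ℂ) ^ 2 / ((p : ℂ) ^ 4 + (γ : ℂ) ^ 4))) =
      ((1 / (2 * γ) * Real.exp (-γ * |τ| / Real.sqrt 2) *
          Real.sin (Real.pi / 4 - γ * |τ| / Real.sqrt 2) : ℝ) : ℂ) := by
  have ha := gribovRoot_re_pos hγ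
  have ha' : 0 < (conj (gribovRoot γ)).re := by rwa [conj_re]
  have hint : ∀ b : ℂ, 0 < b.re →
      Integrable (fun p : ℝ => cexp (I * p * τ) * ((p : ℂ) ^ 2 + b ^ 2)⁻¹) := fun b hb =>
    (integrable_inv_ofReal_sq_add_sq hb).bdd_mul (c := 1) (by fun_prop)
      (.of_forall fun p => by rw [norm_exp]; simp)
  have hsplit : (fun p : ℝ => cexp (I * p * τ) * ((p : ℂ) ^ 2 / ((p : ℂ) ^ 4 + (γ : ℂ) ^ 4))) =
      fun p : ℝ => (cexp (I * p * τ) * ((p : ℂ) ^ 2 + gribovRoot γ ^ 2)⁻¹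
        + cexp (I * p * τ) * ((p : ℂ) ^ 2 + conj (gribovRoot γ) ^ 2)⁻¹) / 2 := by
    ext p
    rw [ofReal_sq_div_pow_four_add_pow_four hγ.ne' (gribovRoot_sq γ)]
    ring
  refine ⟨hsplit ▸ ((hint _ ha).add (hint _ ha')).div_const 2, ?_⟩
  rw [hsplit, integral_div, integral_add (hint _ ha) (hint _ ha'),
    integral_cexp_mul_inv_ofReal_sq_add_sq ha, integral_cexp_mul_inv_ofReal_sq_add_sq ha']
  have hconj : π / conj (gribovRoot γ) * cexp (-(conj (gribovRoot γ) * |τ|))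
      = conj (π / gribovRoot γ * cexp (-(gribovRoot γ * |τ|))) := by
    simp [map_div₀, ← exp_conj]
  rw [hconj, add_conj, div_mul_eq_mul_div, mul_div_assoc, re_ofReal_mul,
    re_cexp_neg_gribovRoot_mul_div_gribovRoot]
  push_cast
  field_simp
end

section
/- Let γ > 0 and define D : ℂ → ℂ by D(z) := (1/(2γ)) · e^{−iγz/√2} · sin(π/4 − iγz/√2). Then: (1) D is entire; (2) for every τ > 0, D(−iτ) = (1/(2γ)) · e^{−γτ/√2} · sin(π/4 − γτ/√2) (the Euclidean Schwinger function of the Gribov-type propagator); and (3) D is not polynomially bounded on ℝ: there exist no constants C > 0 and n ∈ ℕ such that |D(t)| ≤ C(1 + |t|)ⁿ for all t ∈ ℝ. -/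
/-!
On the real axis the exponential factor is a pure phase, while
`|sin (π/4 - i a t)| ≥ |Re sin (π/4 - i a t)| = sin (π/4) cosh (a t)` with `a = γ/√2 > 0`,
so `‖D t‖` grows like `e^{a t}`; since every power of `t` is `o(e^{a t})`, no polynomial bound holds.
-/

open Complex

open Filter Asymptotics in
theorem not_exists_norm_le_pow_of_exp_le {E : Type*} [NormedAddCommGroup E] {f : ℝ → E}
    {a K : ℝ} (ha : 0 < a) (hK : 0 < K) (hf : ∀ t, 0 ≤ t → K * Real.exp (a * t) ≤ ‖f t‖) :
    ¬ ∃ (C : ℝ) (n : ℕ), ∀ t : ℝ, ‖f t‖ ≤ C * (1 + |t|) ^ n := by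
  rintro ⟨C, n, hC⟩
  have exp_isBigO_f : (fun t => Real.exp (a * t)) =O[atTop] f :=
    IsBigO.of_bound K⁻¹ <| (eventually_ge_atTop 0).mono fun t ht => by
      rw [Real.norm_of_nonneg (Real.exp_pos _).le, inv_mul_eq_div, le_div_iff₀' hK]
      exact hf t ht
  have f_isBigO_pow : f =O[atTop] fun t => (1 + t) ^ n :=
    IsBigO.of_bound C <| (eventually_ge_atTop 0).mono fun t ht => by
      simpa only [norm_pow, Real.norm_of_nonneg (by linarith : 0 ≤ 1 + t), abs_of_nonneg ht]
        using hC t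
  have one_add_isBigO : (fun t : ℝ => (1 + t) ^ n) =O[atTop] fun t => t ^ n :=
    ((isLittleO_const_id_atTop (1 : ℝ)).isBigO.add (isBigO_refl id _)).pow n
  exact isLittleO_irrefl (.of_forall fun t => (Real.exp_pos _).ne') <|
    exp_isBigO_f.trans_isLittleO <| f_isBigO_pow.trans_isLittleO <|
      one_add_isBigO.trans_isLittleO <| isLittleO_pow_exp_pos_mul_atTop n ha

theorem Complex.sin_re (z : ℂ) : (sin z).re = Real.sin z.re * Real.cosh z.im := by
  conv_lhs => rw [← re_add_im z]
  rw [sin_add, sin_mul_I, cos_mul_I, ← ofReal_sin, ← ofReal_cos, ← ofReal_sinh, ← ofReal_cosh]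
  simp only [add_re, mul_re, ofReal_re, ofReal_im, I_re, I_im]
  ring

theorem Complex.abs_sin_re_mul_cosh_im_le_norm_sin (z : ℂ) :
    |Real.sin z.re| * Real.cosh z.im ≤ ‖sin z‖ := by
  rw [← abs_of_pos (Real.cosh_pos z.im), ← abs_mul, ← sin_re]
  exact abs_re_le_norm _

theorem Real.exp_div_two_le_cosh (x : ℝ) : Real.exp x / 2 ≤ Real.cosh x := by
  rw [Real.cosh_eq]
  linarith [Real.exp_pos (-x)]

theorem gribov_exp_le_norm (γ t : ℝ) (hγ : 0 < γ) :
    1 / (2 * γ) * (Real.sqrt 2 / 2) / 2 * Real.exp (γ / Real.sqrt 2 * t) ≤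
      ‖((1 / (2 * γ) : ℝ) : ℂ) * Complex.exp (-Complex.I * (γ : ℂ) * t / (Real.sqrt 2 : ℂ)) *
        Complex.sin ((Real.pi / 4 : ℝ) - Complex.I * (γ : ℂ) * t / (Real.sqrt 2 : ℂ))‖ := by
  have h_phase : ‖Complex.exp (-Complex.I * (γ : ℂ) * t / (Real.sqrt 2 : ℂ))‖ = 1 := by
    rw [norm_exp]
    simp
  set w : ℂ := (Real.pi / 4 : ℝ) - Complex.I * (γ : ℂ) * t / (Real.sqrt 2 : ℂ)
  have h_re : w.re = Real.pi / 4 := by simp [w]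
  have h_im : w.im = -(γ / Real.sqrt 2 * t) := by simp [w]; ring
  have h_sin := abs_sin_re_mul_cosh_im_le_norm_sin w
  rw [h_re, h_im, Real.cosh_neg, Real.sin_pi_div_four, abs_of_pos (by positivity)] at h_sin
  rw [norm_mul, norm_mul, h_phase, mul_one, norm_real, Real.norm_of_nonneg (by positivity)]
  calc 1 / (2 * γ) * (Real.sqrt 2 / 2) / 2 * Real.exp (γ / Real.sqrt 2 * t)
      = 1 / (2 * γ) * (Real.sqrt 2 / 2 * (Real.exp (γ / Real.sqrt 2 * t) / 2)) := by ring
    _ ≤ 1 / (2 * γ) * (Real.sqrt 2 / 2 * Real.cosh (γ / Real.sqrt 2 * t)) := by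
      gcongr
      exact Real.exp_div_two_le_cosh _
    _ ≤ 1 / (2 * γ) * ‖sin w‖ := by gcongr

/-- For `γ > 0`, the function
`D(z) = (1/(2γ)) e^{−iγz/√2} sin(π/4 − iγz/√2)` is entire; for every `τ > 0`,
`D(−iτ) = (1/(2γ)) e^{−γτ/√2} sin(π/4 − γτ/√2)` (the Euclidean Schwinger function of the
Gribov-type propagator); and `D` is not polynomially bounded on `ℝ`. -/
theorem gribov_reconstructed_wightman (γ : ℝ) (hγ : 0 < γ) (D : ℂ → ℂ)
    (hD : ∀ z : ℂ, D z = ((1 / (2 * γ) : ℝ) : ℂ) *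
        Complex.exp (-Complex.I * (γ : ℂ) * z / (Real.sqrt 2 : ℂ)) *
        Complex.sin ((Real.pi / 4 : ℝ) - Complex.I * (γ : ℂ) * z / (Real.sqrt 2 : ℂ))) :
    Differentiable ℂ D ∧
    (∀ τ : ℝ, 0 < τ → D (-Complex.I * (τ : ℂ)) =
      ((1 / (2 * γ) * Real.exp (-γ * τ / Real.sqrt 2) *
          Real.sin (Real.pi / 4 - γ * τ / Real.sqrt 2) : ℝ) : ℂ)) ∧
    ¬ ∃ (C : ℝ) (n : ℕ), 0 < C ∧ ∀ t : ℝ, ‖D (t : ℂ)‖ ≤ C * (1 + |t|) ^ n := by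
  refine ⟨?_, fun τ _ => ?_, ?_⟩
  · rw [funext hD]
    fun_prop
  · have h_exp_arg : -Complex.I * (γ : ℂ) * (-Complex.I * (τ : ℂ)) / (Real.sqrt 2 : ℂ) =
        ((-γ * τ / Real.sqrt 2 : ℝ) : ℂ) := by
      push_cast
      linear_combination ((γ : ℂ) * τ / (Real.sqrt 2 : ℂ)) * I_sq
    have h_sin_arg : ((Real.pi / 4 : ℝ) : ℂ) - Complex.I * (γ : ℂ) * (-Complex.I * (τ : ℂ)) /
        (Real.sqrt 2 : ℂ) = ((Real.pi / 4 - γ * τ / Real.sqrt 2 : ℝ) : ℂ) := by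
      push_cast
      linear_combination ((γ : ℂ) * τ / (Real.sqrt 2 : ℂ)) * I_sq
    rw [hD, h_exp_arg, h_sin_arg, ← ofReal_exp, ← ofReal_sin, ← ofReal_mul, ← ofReal_mul]
  · rintro ⟨C, n, -, hC⟩
    exact not_exists_norm_le_pow_of_exp_le (div_pos hγ (Real.sqrt_pos.2 two_pos))
      (by positivity) (fun t _ => hD t ▸ gribov_exp_le_norm γ t hγ) ⟨C, n, hC⟩
end

section
/- Let ζ ∈ ℂ ∖ (−∞,0] and let z = (z₀, z₁, z₂, z₃) ∈ ℂ⁴ lie in the forward tube T. Then the function ℝ³ → ℂ given by k ↦ (2 E_ζ(k))⁻¹ · exp(−i E_ζ(k) z₀ + i(k₁z₁ + k₂z₂ + k₃z₃)) is a Schwartz function of k (it is smooth and, together with all its derivatives, decays faster than any inverse power of ‖k‖). -/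
/-!
Put `E k = √(‖k‖² + ζ)` and `φ k = -i E z₀ + i ⟨k, z⃗⟩`. Since `ζ ∉ (-∞, 0]`, the values `‖k‖² + ζ`
stay in the slit plane and away from `0`, so `E`, `E⁻¹` and `φ` are smooth with polynomially
bounded derivatives. The principal root satisfies `‖E k - ‖k‖‖ ≤ √‖ζ‖`, hence
`Re φ k ≤ ‖z₀‖ √‖ζ‖ - (-Im z₀ - ‖Im z⃗‖) ‖k‖`, and the forward-tube condition makes the slope
positive. By Faà di Bruno every derivative of `exp ∘ φ` is then a polynomial times `exp (-c ‖k‖)`,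
so `exp ∘ φ` is a Schwartz function, and multiplying by `(2E)⁻¹` keeps it one.
-/

open Complex

/-- Principal branch of `√(‖k‖² + ζ)` for `k ∈ ℝ³`. -/
noncomputable def Esqrt (ζ : ℂ) (k : EuclideanSpace ℝ (Fin 3)) : ℂ :=
  ((‖k‖ ^ 2 : ℝ) + ζ) ^ ((1 : ℂ) / 2)

open scoped ContDiff SchwartzMap

theorem Real.rpow_le_rpow_sub_mul_one_add_pow {x δ a : ℝ} {k : ℕ} (hδ : 0 < δ) (hδx : δ ≤ x)
    (hak : a ≤ k) : x ^ a ≤ δ ^ (a - k) * (1 + x) ^ k := by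
  have hx : 0 < x := hδ.trans_le hδx
  calc x ^ a = δ ^ a * (x / δ) ^ a := by
        rw [Real.div_rpow hx.le hδ.le, mul_div_cancel₀ _ (Real.rpow_pos_of_pos hδ a).ne']
    _ ≤ δ ^ a * (x / δ) ^ (k : ℝ) := by
        gcongr
        exact (one_le_div hδ).2 hδx
    _ = δ ^ (a - k) * x ^ k := by
        rw [Real.div_rpow hx.le hδ.le, Real.rpow_sub hδ, Real.rpow_natCast, Real.rpow_natCast]
        field_simp
    _ ≤ δ ^ (a - k) * (1 + x) ^ k := by gcongr; linarith

theorem Real.one_add_pow_mul_exp_neg_le {c t : ℝ} (hc : 0 < c) (ht : 0 ≤ t) (m : ℕ) :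
    (1 + t) ^ m * Real.exp (-(c * t)) ≤ m.factorial / c ^ m * Real.exp c := by
  have h := Real.pow_div_factorial_le_exp (x := c * (1 + t)) (by positivity) m
  rw [mul_pow, mul_add, mul_one, Real.exp_add, div_le_iff₀ (by positivity)] at h
  rw [div_mul_eq_mul_div, le_div_iff₀ (by positivity), Real.exp_neg]
  calc (1 + t) ^ m * (Real.exp (c * t))⁻¹ * c ^ m
      = c ^ m * (1 + t) ^ m * (Real.exp (c * t))⁻¹ := by ring
    _ ≤ Real.exp c * Real.exp (c * t) * m.factorial * (Real.exp (c * t))⁻¹ := by gcongr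
    _ = m.factorial * Real.exp c := by field_simp

namespace Complex

theorem mem_slitPlane_of_forall_ne_ofReal {ζ : ℂ} (hζ : ∀ x : ℝ, x ≤ 0 → ζ ≠ x) :
    ζ ∈ slitPlane := by
  rw [mem_slitPlane_iff, or_iff_not_imp_right, not_not]
  intro him
  by_contra! hre
  exact hζ ζ.re hre (ext rfl (by simpa using him))

theorem ofReal_add_mem_slitPlane {ζ : ℂ} (hζ : ζ ∈ slitPlane) {t : ℝ} (ht : 0 ≤ t) :
    (t : ℂ) + ζ ∈ slitPlane := by
  rw [mem_slitPlane_iff] at hζ ⊢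
  simp only [add_re, ofReal_re, add_im, ofReal_im, zero_add]
  exact hζ.imp (fun h ↦ by linarith) id

theorem exists_pos_forall_le_norm_ofReal_add {ζ : ℂ} (hζ : ζ ∈ slitPlane) :
    ∃ δ > 0, ∀ t : ℝ, 0 ≤ t → δ ≤ ‖(t : ℂ) + ζ‖ := by
  refine ⟨max ζ.re |ζ.im|, ?_, fun t ht ↦ max_le ?_ ?_⟩
  · rcases mem_slitPlane_iff.1 hζ with h | h
    · exact lt_max_of_lt_left h
    · exact lt_max_of_lt_right (abs_pos.2 h)
  · calc ζ.re ≤ ((t : ℂ) + ζ).re := by simp [ht]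
      _ ≤ _ := re_le_norm _
  · calc |ζ.im| = |((t : ℂ) + ζ).im| := by simp
      _ ≤ _ := abs_im_le_norm _

theorem norm_cpow_half_sub_sq_le (w : ℂ) {t : ℝ} (ht : 0 ≤ t) :
    ‖w ^ ((1 : ℂ) / 2) - t‖ ^ 2 ≤ ‖w - (t : ℂ) ^ 2‖ := by
  set E := w ^ ((1 : ℂ) / 2)
  have hsq : E ^ 2 = w := by simpa only [E, one_div] using cpow_ofNat_inv_pow w 2
  have hre : 0 ≤ E.re := by
    simpa only [E, one_div, cpow_inv_two_re] using Real.sqrt_nonneg _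
  -- `Re E ≥ 0` puts `E` at least as close to `t` as to `-t`
  have hle : ‖E - t‖ ≤ ‖E + t‖ := by
    rw [← sq_le_sq₀ (norm_nonneg _) (norm_nonneg _), Complex.sq_norm, Complex.sq_norm,
      normSq_apply, normSq_apply]
    simp only [sub_re, add_re, ofReal_re, sub_im, add_im, ofReal_im]
    nlinarith
  calc ‖E - t‖ ^ 2 ≤ ‖E - t‖ * ‖E + t‖ := by rw [sq]; gcongr
    _ = ‖w - (t : ℂ) ^ 2‖ := by rw [← norm_mul, ← hsq]; ring_nf

theorem norm_iteratedFDeriv_real_eq_norm_iteratedDeriv {f : ℂ → ℂ} {n : ℕ} {w : ℂ}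
    (hf : ContDiffAt ℂ n f w) :
    ‖iteratedFDeriv ℝ n f w‖ = ‖iteratedDeriv n f w‖ := by
  rw [← hf.restrictScalars_iteratedFDeriv (𝕜 := ℝ), Function.comp_apply,
    ContinuousMultilinearMap.norm_restrictScalars, norm_iteratedFDeriv_eq_norm_iteratedDeriv]

theorem norm_iteratedFDeriv_cexp (n : ℕ) (w : ℂ) :
    ‖iteratedFDeriv ℝ n cexp w‖ = Real.exp w.re := by
  rw [norm_iteratedFDeriv_real_eq_norm_iteratedDeriv contDiff_exp.contDiffAt,
    iteratedDeriv_eq_iterate, iter_deriv_exp, norm_exp]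

theorem iteratedDeriv_cpow_const {s w : ℂ} (hw : w ∈ slitPlane) (n : ℕ) :
    iteratedDeriv n (· ^ s) w = (descPochhammer ℂ n).eval s * w ^ (s - n) := by
  induction n generalizing w with
  | zero => simp
  | succ n ih =>
    rw [iteratedDeriv_succ,
      Filter.EventuallyEq.deriv_eq (Filter.eventuallyEq_of_mem (isOpen_slitPlane.mem_nhds hw)
        fun _ hv ↦ ih hv),
      deriv_const_mul_field, deriv_cpow_const hw]
    simp only [descPochhammer_succ_right, Polynomial.eval_mul, Polynomial.eval_sub,
      Polynomial.eval_X, Polynomial.eval_natCast, Nat.cast_succ]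
    ring_nf

end Complex

section TemperateGrowth

variable {E F : Type*} [NormedAddCommGroup E] [NormedSpace ℝ E]
  [NormedAddCommGroup F] [NormedSpace ℝ F]

theorem Function.HasTemperateGrowth.cpow_ofReal {q : E → ℂ} (hq : q.HasTemperateGrowth)
    (hslit : ∀ x, q x ∈ slitPlane) {δ : ℝ} (hδ : 0 < δ) (hδq : ∀ x, δ ≤ ‖q x‖) (s : ℝ) :
    (fun x ↦ q x ^ (s : ℂ)).HasTemperateGrowth := by
  -- an open neighbourhood of the range, so that derivatives within it are true derivatives
  set t : Set ℂ := {w | w ∈ slitPlane ∧ δ / 2 < ‖w‖}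
  have ht_open : IsOpen t := isOpen_slitPlane.inter (isOpen_lt continuous_const continuous_norm)
  have hsmooth : ∀ w ∈ t, ContDiffAt ℂ ω (· ^ (s : ℂ)) w := fun w hw ↦
    (analyticAt_id.cpow analyticAt_const hw.1).contDiffAt
  refine hq.comp' (g := (· ^ (s : ℂ))) (t := t) ?_ ht_open.uniqueDiffOn ?_ ?_
  · rintro _ ⟨x, rfl⟩
    exact ⟨hslit x, by linarith [hδq x]⟩
  · exact fun w hw ↦ (((hsmooth w hw).restrict_scalars ℝ).of_le le_top).contDiffWithinAt
  intro N
  refine ⟨⌈s⌉₊, ∑ n ∈ Finset.range (N + 1),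
    ‖(descPochhammer ℂ n).eval (s : ℂ)‖ * (δ / 2) ^ (s - n - ⌈s⌉₊), by positivity, ?_⟩
  intro n hn w hw
  rw [iteratedFDerivWithin_of_isOpen n ht_open hw,
    norm_iteratedFDeriv_real_eq_norm_iteratedDeriv ((hsmooth w hw).of_le le_top),
    iteratedDeriv_cpow_const hw.1, norm_mul, ← ofReal_natCast, ← ofReal_sub, norm_cpow_real]
  calc _ ≤ ‖(descPochhammer ℂ n).eval (s : ℂ)‖ *
        ((δ / 2) ^ (s - n - ⌈s⌉₊) * (1 + ‖w‖) ^ ⌈s⌉₊) := by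
        gcongr
        exact Real.rpow_le_rpow_sub_mul_one_add_pow (by positivity) hw.2.le
          (by linarith [Nat.le_ceil s, (Nat.cast_nonneg n : (0 : ℝ) ≤ n)])
    _ ≤ _ := by
        rw [← mul_assoc]
        gcongr
        exact Finset.single_le_sum (f := fun n ↦ ‖(descPochhammer ℂ n).eval (s : ℂ)‖ *
          (δ / 2) ^ (s - n - ⌈s⌉₊)) (fun _ _ ↦ by positivity) (Finset.mem_range.2 (by omega))

theorem exists_schwartzMap_of_norm_iteratedFDeriv_le_exp {f : E → F} (hf : ContDiff ℝ ∞ f)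
    {c : ℝ} (hc : 0 < c) (hdecay : ∀ n : ℕ, ∃ (k : ℕ) (C : ℝ), ∀ x,
      ‖iteratedFDeriv ℝ n f x‖ ≤ C * (1 + ‖x‖) ^ k * Real.exp (-(c * ‖x‖))) :
    ∃ g : 𝓢(E, F), ⇑g = f := by
  refine ⟨⟨f, hf, fun p n ↦ ?_⟩, rfl⟩
  obtain ⟨k, C, hC⟩ := hdecay n
  refine ⟨|C| * ((p + k).factorial / c ^ (p + k) * Real.exp c), fun x ↦ ?_⟩
  calc ‖x‖ ^ p * ‖iteratedFDeriv ℝ n f x‖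
      ≤ (1 + ‖x‖) ^ p * (|C| * (1 + ‖x‖) ^ k * Real.exp (-(c * ‖x‖))) := by
        gcongr
        · linarith
        · exact (hC x).trans (by gcongr; exact le_abs_self C)
    _ = |C| * ((1 + ‖x‖) ^ (p + k) * Real.exp (-(c * ‖x‖))) := by ring
    _ ≤ _ := mul_le_mul_of_nonneg_left
        (Real.one_add_pow_mul_exp_neg_le hc (norm_nonneg x) _) (abs_nonneg C)

theorem exists_schwartzMap_cexp_comp {φ : E → ℂ} (hφ : φ.HasTemperateGrowth) {c C : ℝ}
    (hc : 0 < c) (hre : ∀ x, (φ x).re ≤ C - c * ‖x‖) :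
    ∃ g : 𝓢(E, ℂ), ⇑g = fun x ↦ cexp (φ x) := by
  have hexp : ContDiff ℝ ∞ cexp := (contDiff_exp (𝕜 := ℂ)).restrict_scalars ℝ
  refine exists_schwartzMap_of_norm_iteratedFDeriv_le_exp (hexp.comp hφ.1) hc fun n ↦ ?_
  obtain ⟨k, D, hD0, hD⟩ := hφ.norm_iteratedFDeriv_le_uniform n
  refine ⟨k * n, n.factorial * Real.exp C * (1 + D) ^ n, fun x ↦ ?_⟩
  have hbase : 1 ≤ (1 + D) * (1 + ‖x‖) ^ k :=
    one_le_mul_of_one_le_of_one_le (by linarith) (one_le_pow₀ (by simp))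
  calc ‖iteratedFDeriv ℝ n (cexp ∘ φ) x‖
      ≤ n.factorial * Real.exp (C - c * ‖x‖) * ((1 + D) * (1 + ‖x‖) ^ k) ^ n := by
        refine norm_iteratedFDeriv_comp_le hexp hφ.1 (mod_cast le_top) x
          (fun i _ ↦ ?_) (fun i _ hin ↦ ?_)
        · rw [norm_iteratedFDeriv_cexp]
          exact Real.exp_le_exp.2 (hre x)
        · calc ‖iteratedFDeriv ℝ i φ x‖ ≤ D * (1 + ‖x‖) ^ k := hD i hin x
            _ ≤ (1 + D) * (1 + ‖x‖) ^ k := by gcongr; linarith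
            _ ≤ _ := le_self_pow₀ hbase (by omega)
    _ = n.factorial * Real.exp C * (1 + D) ^ n * (1 + ‖x‖) ^ (k * n) *
        Real.exp (-(c * ‖x‖)) := by
        rw [sub_eq_add_neg, Real.exp_add, mul_pow, ← pow_mul]
        ring

theorem hasTemperateGrowth_norm_sq_add_cpow {H : Type*} [NormedAddCommGroup H]
    [InnerProductSpace ℝ H] {ζ : ℂ} (hζ : ζ ∈ slitPlane) (s : ℝ) :
    (fun k : H ↦ (((‖k‖ ^ 2 : ℝ) : ℂ) + ζ) ^ (s : ℂ)).HasTemperateGrowth := by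
  obtain ⟨δ, hδ, hδζ⟩ := exists_pos_forall_le_norm_ofReal_add hζ
  exact Function.HasTemperateGrowth.cpow_ofReal (by fun_prop)
    (fun k ↦ ofReal_add_mem_slitPlane hζ (by positivity)) hδ (fun k ↦ hδζ _ (by positivity)) s

end TemperateGrowth

theorem norm_Esqrt_sub_norm_le (ζ : ℂ) (k : EuclideanSpace ℝ (Fin 3)) :
    ‖Esqrt ζ k - ‖k‖‖ ≤ √‖ζ‖ := by
  refine Real.le_sqrt_of_sq_le ((norm_cpow_half_sub_sq_le _ (norm_nonneg k)).trans_eq ?_)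
  push_cast
  ring_nf

noncomputable def tubePhase (ζ : ℂ) (z : Fin 4 → ℂ) (k : EuclideanSpace ℝ (Fin 3)) : ℂ :=
  -I * Esqrt ζ k * z 0 + I * ((k 0 : ℂ) * z 1 + (k 1 : ℂ) * z 2 + (k 2 : ℂ) * z 3)

noncomputable def spatialIm (z : Fin 4 → ℂ) : EuclideanSpace ℝ (Fin 3) :=
  !₂[(z 1).im, (z 2).im, (z 3).im]

theorem norm_spatialIm (z : Fin 4 → ℂ) :
    ‖spatialIm z‖ = √((z 1).im ^ 2 + (z 2).im ^ 2 + (z 3).im ^ 2) := by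
  simp [spatialIm, EuclideanSpace.norm_eq, Fin.sum_univ_three]

theorem re_tubePhase_le (ζ : ℂ) (z : Fin 4 → ℂ) (k : EuclideanSpace ℝ (Fin 3)) :
    (tubePhase ζ z k).re ≤ ‖z 0‖ * √‖ζ‖ - (-(z 0).im - ‖spatialIm z‖) * ‖k‖ := by
  have hinner : (I * ((k 0 : ℂ) * z 1 + (k 1 : ℂ) * z 2 + (k 2 : ℂ) * z 3)).re
      = -inner ℝ k (spatialIm z) := by
    simp only [Fin.isValue, mul_re, I_re, add_re, ofReal_re, ofReal_im, zero_mul, sub_zero, I_im,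
      add_im, mul_im, add_zero, one_mul, zero_sub, neg_add_rev, spatialIm, PiLp.inner_apply,
      RCLike.inner_apply, Real.ringHom_apply, Fin.sum_univ_three, Matrix.cons_val_zero,
      Matrix.cons_val_one, Matrix.cons_val]
    ring
  have hshift : (-I * (Esqrt ζ k - ‖k‖) * z 0).re ≤ ‖z 0‖ * √‖ζ‖ := by
    calc _ ≤ ‖-I * (Esqrt ζ k - ‖k‖) * z 0‖ := re_le_norm _
      _ = ‖Esqrt ζ k - ‖k‖‖ * ‖z 0‖ := by simp
      _ ≤ √‖ζ‖ * ‖z 0‖ := by gcongr; exact norm_Esqrt_sub_norm_le ζ k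
      _ = _ := mul_comm _ _
  have hcs : -inner ℝ k (spatialIm z) ≤ ‖k‖ * ‖spatialIm z‖ :=
    (neg_le_abs _).trans (abs_real_inner_le_norm _ _)
  have hsplit : (tubePhase ζ z k).re = (-I * (Esqrt ζ k - ‖k‖) * z 0).re
      + ‖k‖ * (z 0).im - inner ℝ k (spatialIm z) := by
    rw [tubePhase, add_re, hinner]
    simp only [neg_mul, neg_re, mul_re, I_re, I_im, zero_mul, one_mul, zero_sub, mul_im, zero_add,
      sub_re, ofReal_re, sub_im, ofReal_im, sub_zero]
    ring
  linarith

theorem hasTemperateGrowth_Esqrt {ζ : ℂ} (hζ : ζ ∈ slitPlane) :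
    (Esqrt ζ).HasTemperateGrowth := by
  have h := hasTemperateGrowth_norm_sq_add_cpow (H := EuclideanSpace ℝ (Fin 3)) hζ (1 / 2)
  have hEsqrt : Esqrt ζ = fun k ↦ (((‖k‖ ^ 2 : ℝ) : ℂ) + ζ) ^ ((1 / 2 : ℝ) : ℂ) := by
    funext k
    norm_num [Esqrt]
  rwa [hEsqrt]

theorem hasTemperateGrowth_inv_two_mul_Esqrt {ζ : ℂ} (hζ : ζ ∈ slitPlane) :
    (fun k ↦ (2 * Esqrt ζ k)⁻¹).HasTemperateGrowth := by
  have h := hasTemperateGrowth_norm_sq_add_cpow (H := EuclideanSpace ℝ (Fin 3)) hζ (-(1 / 2))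
  have hinv : (fun k ↦ (2 * Esqrt ζ k)⁻¹)
      = fun k ↦ 2⁻¹ * (((‖k‖ ^ 2 : ℝ) : ℂ) + ζ) ^ ((-(1 / 2) : ℝ) : ℂ) := by
    funext k
    simp [Esqrt, cpow_neg, mul_comm]
  rw [hinv]
  fun_prop

theorem hasTemperateGrowth_tubePhase {ζ : ℂ} (hζ : ζ ∈ slitPlane) (z : Fin 4 → ℂ) :
    (tubePhase ζ z).HasTemperateGrowth := by
  have hcoord (i : Fin 3) : (fun k : EuclideanSpace ℝ (Fin 3) ↦ k i).HasTemperateGrowth :=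
    (EuclideanSpace.proj i).hasTemperateGrowth
  have hE := hasTemperateGrowth_Esqrt hζ
  unfold tubePhase
  fun_prop

/-- For `ζ ∈ ℂ ∖ (−∞,0]` and `z` in the forward tube
`T = {z ∈ ℂ⁴ : −Im z₀ > √((Im z₁)² + (Im z₂)² + (Im z₃)²)}`, the function
`k ↦ (2E_ζ(k))⁻¹ exp(−iE_ζ(k)z₀ + i(k₁z₁ + k₂z₂ + k₃z₃))` on `ℝ³` is a Schwartz function. -/
theorem tube_integrand_schwartz (ζ : ℂ) (hζ : ∀ x : ℝ, x ≤ 0 → ζ ≠ (x : ℂ))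
    (z : Fin 4 → ℂ)
    (hz : Real.sqrt ((z 1).im ^ 2 + (z 2).im ^ 2 + (z 3).im ^ 2) < -(z 0).im) :
    ∃ g : SchwartzMap (EuclideanSpace ℝ (Fin 3)) ℂ,
      ∀ k : EuclideanSpace ℝ (Fin 3),
        g k = (2 * Esqrt ζ k)⁻¹ *
          Complex.exp (-Complex.I * Esqrt ζ k * z 0 +
            Complex.I * ((k 0 : ℂ) * z 1 + (k 1 : ℂ) * z 2 + (k 2 : ℂ) * z 3)) := by
  have hζ' := mem_slitPlane_of_forall_ne_ofReal hζ
  have hc : 0 < -(z 0).im - ‖spatialIm z‖ := by rw [norm_spatialIm]; linarith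
  obtain ⟨g, hg⟩ := exists_schwartzMap_cexp_comp (hasTemperateGrowth_tubePhase hζ' z) hc
    (re_tubePhase_le ζ z)
  refine ⟨SchwartzMap.smulLeftCLM ℂ (fun k ↦ (2 * Esqrt ζ k)⁻¹) g, fun k ↦ ?_⟩
  rw [SchwartzMap.smulLeftCLM_apply_apply (hasTemperateGrowth_inv_two_mul_Esqrt hζ'), hg,
    smul_eq_mul]
  rfl
end

section
/- Let E, Z ∈ ℂ with Z ≠ 0 and Im E ≠ 0, and define g : ℝ → ℂ by g(t) := (Z/(2E)) · e^{−iEt} + (conj(Z)/(2 · conj(E))) · e^{−i·conj(E)·t}. Then g is not polynomially bounded: there exist no constants C > 0 and n ∈ ℕ such that ‖g(t)‖ ≤ C(1 + |t|)ⁿ for all t ∈ ℝ. -/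
/-! With `a = Z / (2E)`, the two terms of `g t` have norms `‖a‖ e^{(Im E) t}` and
`‖a‖ e^{-(Im E) t}`, so the reverse triangle inequality gives `‖g t‖ ≥ ‖a‖ (e^{|Im E| |t|} - 1)`,
and an exponential outgrows every polynomial. -/

open Complex ComplexConjugate Filter

theorem Real.tendsto_exp_mul_div_one_add_pow_atTop {c : ℝ} (hc : 0 < c) (n : ℕ) :
    Tendsto (fun t => Real.exp (c * t) / (1 + t) ^ n) atTop atTop := by
  have hshift : Tendsto (fun t : ℝ => 1 + t) atTop atTop :=
    tendsto_atTop_add_const_left _ 1 tendsto_id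
  refine (((tendsto_exp_mul_div_rpow_atTop n c hc).comp hshift).const_mul_atTop
    (Real.exp_pos (-c))).congr fun t => ?_
  simp only [Function.comp_apply, Real.rpow_natCast, ← mul_div_assoc, ← Real.exp_add]
  ring_nf

theorem Real.not_forall_exp_mul_le_mul_one_add_pow {c : ℝ} (hc : 0 < c) (C : ℝ) (n : ℕ) :
    ¬ ∀ t ≥ 0, Real.exp (c * t) ≤ C * (1 + t) ^ n := by
  intro hle
  obtain ⟨t, hlarge, ht⟩ :=
    ((Real.tendsto_exp_mul_div_one_add_pow_atTop hc n).eventually_gt_atTop C).and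
      (eventually_ge_atTop 0) |>.exists
  rw [lt_div_iff₀ (by positivity)] at hlarge
  exact (hle t ht).not_gt hlarge

theorem Real.exp_abs_sub_one_le_abs_exp_sub_exp_neg (x : ℝ) :
    Real.exp |x| - 1 ≤ |Real.exp x - Real.exp (-x)| := by
  rcases le_total 0 x with hx | hx
  · rw [abs_of_nonneg hx]
    have : Real.exp (-x) ≤ 1 := Real.exp_le_one_iff.2 (by linarith)
    linarith [le_abs_self (Real.exp x - Real.exp (-x))]
  · rw [abs_of_nonpos hx]
    have : Real.exp x ≤ 1 := Real.exp_le_one_iff.2 hx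
    linarith [neg_abs_le (Real.exp x - Real.exp (-x))]

theorem Complex.norm_mul_exp_neg_I_mul (a w : ℂ) (t : ℝ) :
    ‖a * exp (-I * w * t)‖ = ‖a‖ * Real.exp (w.im * t) := by
  rw [norm_mul, norm_exp]
  simp [mul_re, mul_im]

theorem Complex.le_norm_mul_exp_add_conj_mul_exp (a w : ℂ) (t : ℝ) :
    ‖a‖ * (Real.exp |w.im * t| - 1) ≤
      ‖a * exp (-I * w * t) + conj a * exp (-I * conj w * t)‖ := by
  have hdiff := abs_norm_sub_norm_le (a * exp (-I * w * t)) (-(conj a * exp (-I * conj w * t)))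
  rw [sub_neg_eq_add, norm_neg, norm_mul_exp_neg_I_mul, norm_mul_exp_neg_I_mul, norm_conj,
    conj_im, neg_mul, ← mul_sub, abs_mul, abs_norm] at hdiff
  exact (mul_le_mul_of_nonneg_left (Real.exp_abs_sub_one_le_abs_exp_sub_exp_neg _)
    (norm_nonneg a)).trans hdiff

/-- For `E, Z ∈ ℂ` with `Z ≠ 0` and `Im E ≠ 0`, the function
`g(t) = (Z/(2E)) e^{−iEt} + (Z*/(2E*)) e^{−iE*t}` is not polynomially bounded on `ℝ`. -/
theorem complex_pole_mode_not_polynomially_bounded (E Z : ℂ) (hZ : Z ≠ 0) (hE : E.im ≠ 0) :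
    ¬ ∃ (C : ℝ) (n : ℕ), 0 < C ∧ ∀ t : ℝ,
      ‖Z / (2 * E) * Complex.exp (-Complex.I * E * (t : ℂ)) +
        (starRingEnd ℂ Z) / (2 * starRingEnd ℂ E) *
          Complex.exp (-Complex.I * (starRingEnd ℂ E) * (t : ℂ))‖ ≤ C * (1 + |t|) ^ n := by
  rintro ⟨C, n, -, hbound⟩
  set a := Z / (2 * E)
  have ha : 0 < ‖a‖ :=
    norm_pos_iff.2 (div_ne_zero hZ (mul_ne_zero two_ne_zero (ne_of_apply_ne im hE)))
  refine Real.not_forall_exp_mul_le_mul_one_add_pow (abs_pos.2 hE) ((C + ‖a‖) / ‖a‖) n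
    fun t ht => ?_
  have hgrowth := (le_norm_mul_exp_add_conj_mul_exp a E t).trans
    (by simpa only [a, map_div₀, map_mul, map_ofNat] using hbound t)
  rw [abs_mul, abs_of_nonneg ht] at hgrowth
  have hpow : 1 ≤ (1 + t) ^ n := one_le_pow₀ (by linarith)
  rw [div_mul_eq_mul_div, le_div_iff₀ ha]
  nlinarith
end

section
/- Let E, Z ∈ ℂ with Z ≠ 0 and Im E ≠ 0. Then there exists τ > 0 such that Re((Z/E) · e^{−Eτ}) < 0. -/
open Complex Real

theorem Real.Angle.exists_pos_coe_mul_eq {b : ℝ} (hb : b ≠ 0) (θ : Real.Angle) :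
    ∃ τ : ℝ, 0 < τ ∧ ((b * τ : ℝ) : Real.Angle) = θ := by
  -- `θ.toReal ∈ (-π, π]`, so shifting it by `±2π` gives it the sign of `b`
  have hlo := θ.neg_pi_lt_toReal
  have hhi := θ.toReal_le_pi
  have hπ := Real.pi_pos
  rcases hb.lt_or_gt with hneg | hpos
  · refine ⟨(θ.toReal - 2 * π) / b, div_pos_of_neg_of_neg (by linarith) hneg, ?_⟩
    rw [mul_div_cancel₀ _ hneg.ne, Real.Angle.coe_sub, Real.Angle.coe_two_pi, sub_zero,
      Real.Angle.coe_toReal]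
  · refine ⟨(θ.toReal + 2 * π) / b, div_pos (by linarith) hpos, ?_⟩
    rw [mul_div_cancel₀ _ hpos.ne', Real.Angle.coe_add, Real.Angle.coe_two_pi, add_zero,
      Real.Angle.coe_toReal]

theorem Complex.exists_pos_re_mul_exp_neg_mul_neg {W E : ℂ} (hW : W ≠ 0) (hE : E.im ≠ 0) :
    ∃ τ : ℝ, 0 < τ ∧ (W * exp (-E * τ)).re < 0 := by
  obtain ⟨τ, hτ, hphase⟩ := Real.Angle.exists_pos_coe_mul_eq hE (W.arg + π : ℝ)
  refine ⟨τ, hτ, ?_⟩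
  -- writing `W = exp (log W)`, the sign of the real part is that of `cos (arg W - Im E τ) = -1`
  have hcos : Real.cos (W.arg - E.im * τ) = -1 := by
    rw [← Real.Angle.cos_coe, Real.Angle.coe_sub, hphase, Real.Angle.coe_add, sub_add_cancel_left,
      Real.Angle.cos_neg, Real.Angle.cos_coe, Real.cos_pi]
  rw [← exp_log hW, ← exp_add, exp_re]
  have him : (log W + -E * τ).im = W.arg - E.im * τ := by simp [log_im, sub_eq_add_neg]
  rw [him, hcos]
  exact mul_neg_of_pos_of_neg (Real.exp_pos _) neg_one_lt_zero

/-- For `E, Z ∈ ℂ` with `Z ≠ 0` and `Im E ≠ 0`, there is a Euclidean time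
`τ > 0` with `Re((Z/E) e^{−Eτ}) < 0`: the standard necessary condition for reflection
positivity fails for a pair of complex-conjugate simple poles. -/
theorem complex_pole_schwinger_negative (E Z : ℂ) (hZ : Z ≠ 0) (hE : E.im ≠ 0) :
    ∃ τ : ℝ, 0 < τ ∧ ((Z / E) * Complex.exp (-E * (τ : ℂ))).re < 0 := by
  have hE0 : E ≠ 0 := fun h => hE (by simp [h])
  exact exists_pos_re_mul_exp_neg_mul_neg (div_ne_zero hZ hE0) hE
end

section
/- Let V be a complex vector space with a hermitian sesquilinear form B that is positive semidefinite (B(x,x) is a nonnegative real number for every x ∈ V). Let (T_τ)_{τ ≥ 0} be a family of ℂ-linear maps V → V with T_0 = id and T_{σ+τ} = T_σ ∘ T_τ for all σ, τ ≥ 0, which is B-symmetric: B(T_τ x, y) = B(x, T_τ y) for all x, y ∈ V and τ ≥ 0. Assume that for every x ∈ V there exist C > 0 and n ∈ ℕ with |B(x, T_τ x)| ≤ C(1 + τ)ⁿ for all τ ≥ 0. Then for every x ∈ V and every τ ≥ 0, B(x, T_τ x) is a real number satisfying 0 ≤ B(x, T_τ x) ≤ B(x, x). -/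
/-!
Write `f σ = B x (T σ x)`. Symmetry and the semigroup law give `f σ = B (T (σ/2) x) (T (σ/2) x) ≥ 0`
and `B (T σ x) (T σ x) = f (2σ)`, so Cauchy–Schwarz yields `f σ ² ≤ f 0 · f (2σ)`. Iterating,
`(f τ / f 0) ^ 2 ^ k ≤ f (2 ^ k τ) / f 0`: a doubly exponential lower bound against a quantity
that grows only polynomially in `2 ^ k`, which forces `f τ ≤ f 0`.
-/

open Filter Topology

theorem pow_two_pow_le_of_sq_le_succ {u : ℕ → ℝ} (hu₀ : 0 ≤ u 0)
    (hsq : ∀ k, u k ^ 2 ≤ u (k + 1)) (k : ℕ) : u 0 ^ 2 ^ k ≤ u k := by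
  induction k with
  | zero => simp
  | succ k ih =>
    calc u 0 ^ 2 ^ (k + 1) = (u 0 ^ 2 ^ k) ^ 2 := by rw [pow_succ, pow_mul]
      _ ≤ u k ^ 2 := pow_le_pow_left₀ (by positivity) ih 2
      _ ≤ u (k + 1) := hsq k

theorem le_one_of_sq_le_succ_of_le_two_pow {u : ℕ → ℝ} (hu₀ : 0 ≤ u 0)
    (hsq : ∀ k, u k ^ 2 ≤ u (k + 1)) {K : ℝ} {n : ℕ} (hK : ∀ k, u k ≤ K * (2 ^ k) ^ n) :
    u 0 ≤ 1 := by
  by_contra! h₁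
  have hK₀ : 0 < K := by simpa using (zero_lt_one.trans h₁).trans_le (hK 0)
  have hlim : Tendsto (fun k : ℕ ↦ ((2 ^ k : ℕ) : ℝ) ^ n / u 0 ^ 2 ^ k) atTop (𝓝 0) :=
    (tendsto_pow_const_div_const_pow_of_one_lt n h₁).comp
      (tendsto_pow_atTop_atTop_of_one_lt one_lt_two)
  have : K⁻¹ ≤ 0 := ge_of_tendsto hlim <| Eventually.of_forall fun k ↦ by
    rw [le_div_iff₀ (by positivity), inv_mul_le_iff₀ hK₀]
    push_cast
    exact (pow_two_pow_le_of_sq_le_succ hu₀ hsq k).trans (hK k)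
  exact (inv_pos.2 hK₀).not_ge this

theorem le_apply_zero_of_sq_le_mul_of_le_poly {f : ℝ → ℝ} (hf : ∀ σ, 0 ≤ σ → 0 ≤ f σ)
    (hsq : ∀ σ, 0 ≤ σ → f σ ^ 2 ≤ f 0 * f (2 * σ)) {C : ℝ} {n : ℕ}
    (hpoly : ∀ σ, 0 ≤ σ → f σ ≤ C * (1 + σ) ^ n) {τ : ℝ} (hτ : 0 ≤ τ) : f τ ≤ f 0 := by
  obtain ha | ha := (hf 0 le_rfl).eq_or_lt
  · have hτ₀ : f τ ^ 2 ≤ 0 := by simpa [← ha] using hsq τ hτ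
    rw [← ha, pow_eq_zero_iff two_ne_zero |>.1 (le_antisymm hτ₀ (sq_nonneg _))]
  have hC : 0 ≤ C := by simpa using ha.le.trans (hpoly 0 le_rfl)
  set u : ℕ → ℝ := fun k ↦ f (2 ^ k * τ) / f 0
  have hu_sq (k : ℕ) : u k ^ 2 ≤ u (k + 1) := by
    have h := hsq (2 ^ k * τ) (by positivity)
    rw [← mul_assoc, ← pow_succ'] at h
    rw [div_pow, sq (f 0), ← div_div, div_le_div_iff_of_pos_right ha, div_le_iff₀' ha]
    exact h
  have hu_le (k : ℕ) : u k ≤ C / f 0 * (1 + τ) ^ n * (2 ^ k) ^ n := by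
    have hgrow : 1 + 2 ^ k * τ ≤ (1 + τ) * 2 ^ k := by
      nlinarith [one_le_pow₀ (M₀ := ℝ) one_le_two (n := k)]
    calc u k ≤ C * (1 + 2 ^ k * τ) ^ n / f 0 :=
          div_le_div_of_nonneg_right (hpoly _ (by positivity)) ha.le
      _ ≤ C * ((1 + τ) * 2 ^ k) ^ n / f 0 := by gcongr
      _ = C / f 0 * (1 + τ) ^ n * (2 ^ k) ^ n := by rw [mul_pow]; ring
  simpa [u, div_le_one ha] using le_one_of_sq_le_succ_of_le_two_pow (u := u)
    (div_nonneg (hf _ (by positivity)) ha.le) hu_sq hu_le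

section SymmetricSemigroup

variable {V : Type*} [AddCommGroup V] [Module ℂ V]

theorem norm_sq_le_re_mul_re (B : V → V → ℂ)
    (hadd : ∀ x x' y : V, B (x + x') y = B x y + B x' y)
    (hsmul : ∀ (c : ℂ) (x y : V), B (c • x) y = starRingEnd ℂ c * B x y)
    (hherm : ∀ x y : V, B x y = starRingEnd ℂ (B y x))
    (hpos : ∀ x : V, 0 ≤ (B x x).re) (x y : V) :
    ‖B x y‖ ^ 2 ≤ (B x x).re * (B y y).re := by
  let core : PreInnerProductSpace.Core ℂ V :=
    { inner := B
      conj_inner_symm := fun x y ↦ (hherm x y).symm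
      re_inner_nonneg := hpos
      add_left := hadd
      smul_left := fun x y c ↦ hsmul c x y }
  have h : ‖B x y‖ * ‖B y x‖ ≤ (B x x).re * (B y y).re :=
    InnerProductSpace.Core.inner_mul_inner_self_le (c := core) x y
  rwa [hherm y x, Complex.norm_conj, ← sq] at h

theorem form_apply_apply_eq_apply_add {B : V → V → ℂ} {T : ℝ → V →ₗ[ℂ] V}
    (hTsemi : ∀ σ τ : ℝ, 0 ≤ σ → 0 ≤ τ → ∀ x : V, T (σ + τ) x = T σ (T τ x))
    (hTsymm : ∀ τ : ℝ, 0 ≤ τ → ∀ x y : V, B (T τ x) y = B x (T τ y))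
    {s t : ℝ} (hs : 0 ≤ s) (ht : 0 ≤ t) (x y : V) :
    B (T s x) (T t y) = B x (T (s + t) y) := by
  rw [hTsymm s hs, hTsemi s t hs ht]

end SymmetricSemigroup

theorem semigroup_contraction_from_polynomial_growth_general
    {V : Type*} [AddCommGroup V] [Module ℂ V] (B : V → V → ℂ)
    (hadd₁ : ∀ x x' y : V, B (x + x') y = B x y + B x' y)
    (hsmul₁ : ∀ (c : ℂ) (x y : V), B (c • x) y = starRingEnd ℂ c * B x y)
    (hherm : ∀ x y : V, B x y = starRingEnd ℂ (B y x))
    (hpos : ∀ x : V, 0 ≤ (B x x).re ∧ (B x x).im = 0)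
    (T : ℝ → V →ₗ[ℂ] V)
    (hT0 : T 0 = LinearMap.id)
    (hTsemi : ∀ σ τ : ℝ, 0 ≤ σ → 0 ≤ τ → ∀ x : V, T (σ + τ) x = T σ (T τ x))
    (hTsymm : ∀ τ : ℝ, 0 ≤ τ → ∀ x y : V, B (T τ x) y = B x (T τ y))
    (hTpoly : ∀ x : V, ∃ (C : ℝ) (n : ℕ), 0 < C ∧
      ∀ τ : ℝ, 0 ≤ τ → ‖B x (T τ x)‖ ≤ C * (1 + τ) ^ n) :
    ∀ x : V, ∀ τ : ℝ, 0 ≤ τ →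
      (B x (T τ x)).im = 0 ∧ 0 ≤ (B x (T τ x)).re ∧ (B x (T τ x)).re ≤ (B x x).re := by
  intro x τ hτ
  have hshift {s t : ℝ} (hs : 0 ≤ s) (ht : 0 ≤ t) (y : V) :=
    form_apply_apply_eq_apply_add hTsemi hTsymm hs ht x y
  have hhalf {σ : ℝ} (hσ : 0 ≤ σ) : B x (T σ x) = B (T (σ / 2) x) (T (σ / 2) x) := by
    rw [hshift (by linarith) (by linarith), add_halves]
  have hnonneg (σ : ℝ) (hσ : 0 ≤ σ) : 0 ≤ (B x (T σ x)).re := hhalf hσ ▸ (hpos _).1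
  have hid : B x (T 0 x) = B x x := by rw [hT0, LinearMap.id_apply]
  have hsq (σ : ℝ) (hσ : 0 ≤ σ) :
      (B x (T σ x)).re ^ 2 ≤ (B x (T 0 x)).re * (B x (T (2 * σ) x)).re := by
    have h := norm_sq_le_re_mul_re B hadd₁ hsmul₁ hherm (fun y ↦ (hpos y).1) x (T σ x)
    rw [hshift hσ hσ, ← two_mul, ← hid] at h
    exact (sq_le_sq.2 (by simpa using Complex.abs_re_le_norm _)).trans h
  obtain ⟨C, n, -, hC⟩ := hTpoly x
  refine ⟨hhalf hτ ▸ (hpos _).2, hnonneg τ hτ, hid ▸ ?_⟩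
  exact le_apply_zero_of_sq_le_mul_of_le_poly (f := fun σ ↦ (B x (T σ x)).re) hnonneg hsq
    (fun σ hσ ↦ (Complex.re_le_norm _).trans (hC σ hσ)) hτ

/-- contraction estimate in Appendix B of the paper: let `B` be a positive
semidefinite hermitian sesquilinear form on a complex vector space `V` and `(T_τ)_{τ≥0}` a
`B`-symmetric semigroup of linear maps such that each `τ ↦ B(x, T_τ x)` grows at most
polynomially. Then `B(x, T_τ x)` is real and `0 ≤ B(x, T_τ x) ≤ B(x, x)`. -/
theorem semigroup_contraction_from_polynomial_growth
    {V : Type*} [AddCommGroup V] [Module ℂ V] (B : V → V → ℂ)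
    (hadd₁ : ∀ x x' y : V, B (x + x') y = B x y + B x' y)
    (hsmul₁ : ∀ (c : ℂ) (x y : V), B (c • x) y = starRingEnd ℂ c * B x y)
    (hadd₂ : ∀ x y y' : V, B x (y + y') = B x y + B x y')
    (hsmul₂ : ∀ (c : ℂ) (x y : V), B x (c • y) = c * B x y)
    (hherm : ∀ x y : V, B x y = starRingEnd ℂ (B y x))
    (hpos : ∀ x : V, 0 ≤ (B x x).re ∧ (B x x).im = 0)
    (T : ℝ → V →ₗ[ℂ] V)
    (hT0 : T 0 = LinearMap.id)
    (hTsemi : ∀ σ τ : ℝ, 0 ≤ σ → 0 ≤ τ → ∀ x : V, T (σ + τ) x = T σ (T τ x))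
    (hTsymm : ∀ τ : ℝ, 0 ≤ τ → ∀ x y : V, B (T τ x) y = B x (T τ y))
    (hTpoly : ∀ x : V, ∃ (C : ℝ) (n : ℕ), 0 < C ∧
      ∀ τ : ℝ, 0 ≤ τ → ‖B x (T τ x)‖ ≤ C * (1 + τ) ^ n) :
    ∀ x : V, ∀ τ : ℝ, 0 ≤ τ →
      (B x (T τ x)).im = 0 ∧ 0 ≤ (B x (T τ x)).re ∧ (B x (T τ x)).re ≤ (B x x).re :=
  semigroup_contraction_from_polynomial_growth_general B hadd₁ hsmul₁ hherm hpos T hT0 hTsemi hTsymm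
    hTpoly
end

section
/- Let V be a finite-dimensional complex vector space with a hermitian sesquilinear form B that is nondegenerate (if B(w, v) = 0 for all w ∈ V then v = 0), and let H : V → V be a ℂ-linear map that is B-selfadjoint: B(Hx, y) = B(x, Hy) for all x, y ∈ V. Suppose v ∈ V, v ≠ 0, satisfies Hv = E·v with Im E ≠ 0. Then there exist w ∈ V and k ∈ ℕ such that (H − conj(E)·id)^k w = 0, B(w, v) ≠ 0, and B(w, w) = 0. -/
/-!
For a `B`-selfadjoint `H`, `B((H - μ)x, y) - B(x, (H - ν)y) = (ν - conj μ) B(x, y)`, so induction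
on the nilpotency orders shows that the generalized eigenspaces of `μ` and `ν` are `B`-orthogonal
unless `ν = conj μ`. Since `V` is spanned by generalized eigenvectors and `B(·, v) ≠ 0`, some
generalized eigenvector `w` has `B(w, v) ≠ 0`; orthogonality forces its eigenvalue to be `conj E`,
and since `conj E` is not its own conjugate, `w` is `B`-orthogonal to itself.
-/

open Module End

namespace LinearMap

variable {K V : Type*} [Field K] [AddCommGroup V] [Module K V] {σ : K →+* K}

theorem apply_sub_smul_sub_apply_sub_smul (B : V →ₛₗ[σ] V →ₗ[K] K) {H : End K V}
    (hH : ∀ x y, B (H x) y = B x (H y)) (μ ν : K) (x y : V) :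
    B ((H - μ • 1) x) y - B x ((H - ν • 1) y) = (ν - σ μ) * B x y := by
  simp only [sub_apply, smul_apply, one_apply, map_sub, map_smulₛₗ, LinearMap.sub_apply,
    LinearMap.smul_apply, smul_eq_mul, RingHom.id_apply, hH]
  ring

theorem apply_eq_zero_of_pow_sub_smul_apply_eq_zero (B : V →ₛₗ[σ] V →ₗ[K] K) {H : End K V}
    (hH : ∀ x y, B (H x) y = B x (H y)) {μ ν : K} (hμν : σ μ ≠ ν) (k : ℕ) :
    ∀ (j : ℕ) {x y : V}, ((H - μ • 1) ^ k) x = 0 → ((H - ν • 1) ^ j) y = 0 → B x y = 0 := by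
  induction k with
  | zero => intro j x y hx _; simp_all
  | succ k ihk =>
    intro j x y hx hy
    induction j generalizing y with
    | zero => simp_all
    | succ j ihj =>
      have hleft : B ((H - μ • 1) x) y = 0 :=
        ihk (j + 1) (by rwa [← Module.End.mul_apply, ← pow_succ]) hy
      have hright : B x ((H - ν • 1) y) = 0 :=
        ihj (by rwa [← Module.End.mul_apply, ← pow_succ])
      have := apply_sub_smul_sub_apply_sub_smul B hH μ ν x y
      rw [hleft, hright, sub_zero, eq_comm, mul_eq_zero] at this
      exact this.resolve_left (sub_ne_zero.2 hμν.symm)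

theorem apply_eq_zero_of_mem_maxGenEigenspace (B : V →ₛₗ[σ] V →ₗ[K] K) {H : End K V}
    (hH : ∀ x y, B (H x) y = B x (H y)) {μ ν : K} (hμν : σ μ ≠ ν) {x y : V}
    (hx : x ∈ H.maxGenEigenspace μ) (hy : y ∈ H.maxGenEigenspace ν) : B x y = 0 := by
  obtain ⟨k, hk⟩ := (mem_maxGenEigenspace _ _ _).1 hx
  obtain ⟨j, hj⟩ := (mem_maxGenEigenspace _ _ _).1 hy
  exact apply_eq_zero_of_pow_sub_smul_apply_eq_zero B hH hμν k j hk hj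

end LinearMap

theorem Module.End.exists_mem_maxGenEigenspace_apply_ne_zero {K V W : Type*} [Field K]
    [IsAlgClosed K] [AddCommGroup V] [Module K V] [FiniteDimensional K V] [AddCommGroup W]
    [Module K W] {σ : K →+* K} (H : End K V) {f : V →ₛₗ[σ] W} (hf : f ≠ 0) :
    ∃ μ, ∃ w ∈ H.maxGenEigenspace μ, f w ≠ 0 := by
  by_contra! h
  refine hf (LinearMap.ker_eq_top.1 (eq_top_iff.2 ?_))
  rw [← H.iSup_maxGenEigenspace_eq_top]
  exact iSup_le fun μ w hw ↦ h μ w hw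

theorem complex_eigenvalue_zero_norm_partner_general
    {V : Type*} [AddCommGroup V] [Module ℂ V] [FiniteDimensional ℂ V] (B : V → V → ℂ)
    (hadd₁ : ∀ x x' y : V, B (x + x') y = B x y + B x' y)
    (hsmul₁ : ∀ (c : ℂ) (x y : V), B (c • x) y = starRingEnd ℂ c * B x y)
    (hadd₂ : ∀ x y y' : V, B x (y + y') = B x y + B x y')
    (hsmul₂ : ∀ (c : ℂ) (x y : V), B x (c • y) = c * B x y)
    (hnondeg : ∀ v : V, (∀ w : V, B w v = 0) → v = 0)
    (H : V →ₗ[ℂ] V)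
    (hsa : ∀ x y : V, B (H x) y = B x (H y))
    (v : V) (hv0 : v ≠ 0) (E : ℂ) (hv : H v = E • v) (hE : E.im ≠ 0) :
    ∃ (w : V) (k : ℕ),
      (((H - starRingEnd ℂ E • LinearMap.id : Module.End ℂ V) ^ k) w = 0) ∧ B w v ≠ 0 ∧ B w w = 0 := by
  let β : V →ₗ⋆[ℂ] V →ₗ[ℂ] ℂ := LinearMap.mk₂'ₛₗ _ _ B hadd₁ hsmul₁ hadd₂ hsmul₂
  have hβv : β.flip v ≠ 0 := fun h ↦ hv0 <| hnondeg v fun w ↦ LinearMap.congr_fun h w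
  obtain ⟨μ, w, hw, hwv⟩ := exists_mem_maxGenEigenspace_apply_ne_zero H hβv
  have hvE : v ∈ maxGenEigenspace H E :=
    eigenspace_le_maxGenEigenspace (mem_eigenspace_iff.2 hv)
  have hμ : starRingEnd ℂ μ = E := by
    by_contra hμE
    exact hwv (β.apply_eq_zero_of_mem_maxGenEigenspace hsa hμE hw hvE)
  obtain rfl : μ = starRingEnd ℂ E := by rw [← hμ, Complex.conj_conj]
  have hEconj : starRingEnd ℂ (starRingEnd ℂ E) ≠ starRingEnd ℂ E := by
    rw [Complex.conj_conj]
    exact fun h ↦ hE (Complex.conj_eq_iff_im.1 h.symm)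
  obtain ⟨k, hk⟩ := (mem_maxGenEigenspace _ _ _).1 hw
  exact ⟨w, k, hk, hwv, β.apply_eq_zero_of_mem_maxGenEigenspace hsa hEconj hw hw⟩

/-- Claim 2 (2) of the paper: on a finite-dimensional complex vector space
with a nondegenerate hermitian sesquilinear form `B`, every eigenvector `v ≠ 0` of a
`B`-selfadjoint operator `H` with a non-real eigenvalue `E` has a zero-norm partner `w`
which is a generalized eigenvector of `H` with eigenvalue `conj E` and `B(w, v) ≠ 0`. -/
theorem complex_eigenvalue_zero_norm_partner
    {V : Type*} [AddCommGroup V] [Module ℂ V] [FiniteDimensional ℂ V] (B : V → V → ℂ)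
    (hadd₁ : ∀ x x' y : V, B (x + x') y = B x y + B x' y)
    (hsmul₁ : ∀ (c : ℂ) (x y : V), B (c • x) y = starRingEnd ℂ c * B x y)
    (hadd₂ : ∀ x y y' : V, B x (y + y') = B x y + B x y')
    (hsmul₂ : ∀ (c : ℂ) (x y : V), B x (c • y) = c * B x y)
    (hherm : ∀ x y : V, B x y = starRingEnd ℂ (B y x))
    (hnondeg : ∀ v : V, (∀ w : V, B w v = 0) → v = 0)
    (H : V →ₗ[ℂ] V)
    (hsa : ∀ x y : V, B (H x) y = B x (H y))
    (v : V) (hv0 : v ≠ 0) (E : ℂ) (hv : H v = E • v) (hE : E.im ≠ 0) :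
    ∃ (w : V) (k : ℕ),
      (((H - starRingEnd ℂ E • LinearMap.id : Module.End ℂ V) ^ k) w = 0) ∧ B w v ≠ 0 ∧ B w w = 0 :=
  complex_eigenvalue_zero_norm_partner_general B hadd₁ hsmul₁ hadd₂ hsmul₂ hnondeg H hsa v hv0 E hv
    hE
end

section
/- Let T be a tempered distribution on ℝ, i.e., a continuous linear functional on the Schwartz space 𝒮(ℝ; ℂ). Then there exist tempered distributions T₊ and T₋ on ℝ such that T = T₊ + T₋, T₊(f) = 0 for every f ∈ 𝒮(ℝ; ℂ) whose closed support is contained in (−∞, 0), and T₋(f) = 0 for every f ∈ 𝒮(ℝ; ℂ) whose closed support is contained in (0, ∞). -/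
/-!
Let `M` and `P` be the Schwartz functions supported in `(−∞, 0)` and in `(0, ∞)`. Since their
supports are disjoint, every Schwartz seminorm satisfies `‖g‖ ≤ ‖f + g‖` for `f ∈ M`, `g ∈ P`.
Hence `f + g ↦ T g` is a well-defined functional on `M + P` dominated by the continuous seminorm
that dominates `T`, and Hahn–Banach extends it to a tempered distribution `T₊`, which vanishes
on `M` and agrees with `T` on `P`. Then `T₋ = T − T₊` vanishes on `P`.
-/

open SchwartzMap

theorem Seminorm.finset_sup_apply_mono {𝕜 E ι : Type*} [SeminormedRing 𝕜] [AddCommGroup E]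
    [Module 𝕜 E] {p : ι → Seminorm 𝕜 E} (s : Finset ι) {x y : E} (h : ∀ i, p i x ≤ p i y) :
    s.sup p x ≤ s.sup p y :=
  Seminorm.finset_sup_apply_le (apply_nonneg _ _) fun _ hi ↦
    (h _).trans (Seminorm.le_finset_sup_apply hi)

theorem StrongDual.exists_eq_zero_on_and_eq_on {𝕜 E ι : Type*} [RCLike 𝕜] [AddCommGroup E]
    [Module 𝕜 E] [TopologicalSpace E] {q : SeminormFamily 𝕜 E ι} (hq : WithSeminorms q)
    {M P : Submodule 𝕜 E} (hMP : ∀ i, ∀ x ∈ M, ∀ y ∈ P, q i y ≤ q i (x + y))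
    (T : StrongDual 𝕜 E) :
    ∃ S : StrongDual 𝕜 E, (∀ x ∈ M, S x = 0) ∧ ∀ y ∈ P, S y = T y := by
  obtain ⟨s, C, -, hT⟩ := Seminorm.bound_of_continuous hq T.toSeminorm T.continuous.norm
  set p : Seminorm 𝕜 E := C • s.sup q
  have hT : ∀ y, ‖T y‖ ≤ p y := hT
  have hp : ∀ x ∈ M, ∀ y ∈ P, p y ≤ p (x + y) := fun x hx y hy ↦
    mul_le_mul_of_nonneg_left (Seminorm.finset_sup_apply_mono s fun i ↦ hMP i x hx y hy) C.2
  let f : E →ₗ.[𝕜] 𝕜 := ⟨M, 0⟩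
  let g : E →ₗ.[𝕜] 𝕜 := ⟨P, T.toLinearMap ∘ₗ P.subtype⟩
  -- `T` vanishes on `M ⊓ P`, since there `p y ≤ p (-y + y) = 0`.
  have hfg : ∀ (x : f.domain) (y : g.domain), (x : E) = y → f x = g y := by
    rintro ⟨x, hx⟩ ⟨y, hy⟩ (rfl : x = y)
    show (0 : 𝕜) = T x
    exact (norm_le_zero_iff.mp <| (hT x).trans <| (hp (-x) (M.neg_mem hx) x hy).trans_eq <|
      by simp).symm
  have hφ : ∀ z, ‖(f.sup g hfg) z‖ ≤ p z := by
    intro z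
    obtain ⟨x, hx, y, hy, hxy⟩ := Submodule.mem_sup.mp z.2
    rw [LinearPMap.sup_apply hfg ⟨x, hx⟩ ⟨y, hy⟩ z hxy, ← hxy]
    simpa [f, g] using (hT y).trans (hp x hx y hy)
  obtain ⟨h, hh, hhp⟩ := Module.Dual.exists_extension_of_le_seminorm _ (f.sup g hfg).toFun hφ
  refine ⟨⟨h, hq.continuous_normedSpace_rng 𝕜 h ⟨s, C, hhp⟩⟩, fun x hx ↦ ?_, fun y hy ↦ ?_⟩
  · exact (hh ⟨x, Submodule.mem_sup_left hx⟩).trans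
      ((f.left_le_sup g hfg).2 (x := ⟨x, hx⟩) rfl).symm
  · exact (hh ⟨y, Submodule.mem_sup_right hy⟩).trans
      ((f.right_le_sup g hfg).2 (x := ⟨y, hy⟩) rfl).symm

namespace SchwartzMap

variable {𝕜 E F : Type*} [NormedAddCommGroup E] [NormedSpace ℝ E] [NormedAddCommGroup F]
  [NormedSpace ℝ F] [NormedField 𝕜] [NormedSpace 𝕜 F] [SMulCommClass ℝ 𝕜 F]

variable (𝕜 F) in
def supportedIn (s : Set E) : Submodule 𝕜 𝓢(E, F) where
  carrier := {f | tsupport f ⊆ s}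
  add_mem' hf hg := (tsupport_add _ _).trans (Set.union_subset hf hg)
  zero_mem' := by simp
  smul_mem' c _ hf := (tsupport_smul_subset_right (fun _ ↦ c) _).trans hf

theorem seminorm_le_seminorm_add_of_disjoint (k n : ℕ) {f g : 𝓢(E, F)}
    (hfg : Disjoint (tsupport f) (tsupport g)) :
    SchwartzMap.seminorm 𝕜 k n g ≤ SchwartzMap.seminorm 𝕜 k n (f + g) := by
  refine seminorm_le_bound 𝕜 k n g (apply_nonneg _ _) fun x ↦ ?_
  by_cases hx : x ∈ tsupport g
  · have hf : f =ᶠ[nhds x] 0 := notMem_tsupport_iff_eventuallyEq.mp (hfg.notMem_of_mem_right hx)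
    have hsum : ⇑(f + g) =ᶠ[nhds x] g := by
      filter_upwards [hf] with y hy
      simp [hy]
    rw [← (hsum.iteratedFDeriv ℝ n).eq_of_nhds]
    exact le_seminorm 𝕜 k n (f + g) x
  · have : iteratedFDeriv ℝ n g x = 0 :=
      Function.notMem_support.mp fun h ↦ hx (support_iteratedFDeriv_subset n h)
    simp [this]

end SchwartzMap

/-- every tempered distribution on `ℝ` splits as a sum `T = T₊ + T₋` where
`T₊` vanishes on test functions supported in `(−∞,0)` and `T₋` vanishes on test functions
supported in `(0,∞)` (i.e. `T₊` is supported in `[0,∞)` and `T₋` in `(−∞,0]`). -/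
theorem tempered_distribution_support_splitting (T : SchwartzMap ℝ ℂ →L[ℂ] ℂ) :
    ∃ Tp Tm : SchwartzMap ℝ ℂ →L[ℂ] ℂ, T = Tp + Tm ∧
      (∀ f : SchwartzMap ℝ ℂ, tsupport ⇑f ⊆ Set.Iio 0 → Tp f = 0) ∧
      (∀ f : SchwartzMap ℝ ℂ, tsupport ⇑f ⊆ Set.Ioi 0 → Tm f = 0) := by
  have hdisj (i : ℕ × ℕ) : ∀ f ∈ supportedIn ℂ ℂ (Set.Iio (0 : ℝ)),
      ∀ g ∈ supportedIn ℂ ℂ (Set.Ioi (0 : ℝ)),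
      schwartzSeminormFamily ℂ ℝ ℂ i g ≤ schwartzSeminormFamily ℂ ℝ ℂ i (f + g) :=
    fun _ hf _ hg ↦ seminorm_le_seminorm_add_of_disjoint i.1 i.2
      (Set.Ioi_disjoint_Iio_same.symm.mono hf hg)
  obtain ⟨Tp, hTp_neg, hTp_pos⟩ :=
    StrongDual.exists_eq_zero_on_and_eq_on (schwartz_withSeminorms ℂ ℝ ℂ) hdisj T
  refine ⟨Tp, T - Tp, (add_sub_cancel Tp T).symm, hTp_neg, fun f hf ↦ ?_⟩
  rw [sub_apply, hTp_pos f hf, sub_self]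
end

section
/- Let z₀ ∈ ℂ, R > 0, n ≥ 1, and let f : ℂ → ℂ have a pole of order at most n at z₀, in the sense that there is a function g holomorphic on the open ball B(z₀, R) with f(ζ) = g(ζ)/(ζ − z₀)^n for all ζ ∈ B(z₀, R) ∖ {z₀}. Let 0 < r < R and let w ∈ ℂ with |w − z₀| > r. Then (1/(2πi)) ∮_{|ζ−z₀|=r} f(ζ)/(ζ − w) dζ = − Σ_{m=1}^{n} Z_m/(w − z₀)^m, where Z_m := (1/(2πi)) ∮_{|ζ−z₀|=r} f(ζ)(ζ − z₀)^{m−1} dζ and both circle integrals are taken counterclockwise. -/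
/-!
On the circle `|ζ - z₀| = r`, expand `1/(ζ - w)` as a finite geometric series in
`(ζ - z₀)/(w - z₀)` with remainder `((ζ - z₀)/(w - z₀))ⁿ/(ζ - w)`. The series terms integrate
against `f` to the `Z_m`; in the remainder `f(ζ)(ζ - z₀)ⁿ = g(ζ)`, so it is
`g(ζ)/((w - z₀)ⁿ(ζ - w))`, holomorphic on the closed disc because `w` lies outside it, and its
integral vanishes by Cauchy's theorem.
-/

open Finset Metric Set

theorem inv_sub_eq_div_sub_sum {K : Type*} [Field K] {a b : K} (hb : b ≠ 0) (hab : a ≠ b)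
    (n : ℕ) : (a - b)⁻¹ = (a / b) ^ n / (a - b) - ∑ m ∈ Icc 1 n, a ^ (m - 1) / b ^ m := by
  have hab' : a - b ≠ 0 := sub_ne_zero.2 hab
  induction n with
  | zero => simp [div_eq_inv_mul]
  | succ n ih =>
    have step : (a / b) ^ n / (a - b) = (a / b) ^ (n + 1) / (a - b) - a ^ n / b ^ (n + 1) := by
      rw [div_pow, div_pow, pow_succ]
      field_simp
      ring
    rw [sum_Icc_succ_top (by omega), Nat.add_sub_cancel]
    linear_combination ih + step

theorem circleIntegral_div_sub_eq_sub_sum {f : ℂ → ℂ} {c w : ℂ} {r : ℝ} (hr : 0 ≤ r)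
    (hf : ContinuousOn f (sphere c r)) (hw : w ∉ sphere c r) (hwc : w ≠ c) (n : ℕ) :
    (∮ ζ in C(c, r), f ζ / (ζ - w)) =
      (∮ ζ in C(c, r), f ζ * (ζ - c) ^ n / (ζ - w)) / (w - c) ^ n -
        ∑ m ∈ Icc 1 n, (∮ ζ in C(c, r), f ζ * (ζ - c) ^ (m - 1)) / (w - c) ^ m := by
  have hsub : ∀ ζ ∈ sphere c r, ζ - w ≠ 0 := fun ζ hζ =>
    sub_ne_zero.2 (ne_of_mem_of_not_mem hζ hw)
  have hpow : ∀ k : ℕ, ContinuousOn (fun ζ => f ζ * (ζ - c) ^ k) (sphere c r) := fun k =>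
    hf.mul (by fun_prop)
  have hexpand : EqOn (fun ζ => f ζ / (ζ - w))
      (fun ζ => ((w - c) ^ n)⁻¹ * (f ζ * (ζ - c) ^ n / (ζ - w)) -
        ∑ m ∈ Icc 1 n, ((w - c) ^ m)⁻¹ * (f ζ * (ζ - c) ^ (m - 1))) (sphere c r) := by
    intro ζ hζ
    have key : (ζ - w)⁻¹ =
        ((ζ - c) / (w - c)) ^ n / (ζ - w) - ∑ m ∈ Icc 1 n, (ζ - c) ^ (m - 1) / (w - c) ^ m := by
      simpa only [sub_sub_sub_cancel_right] using
        inv_sub_eq_div_sub_sum (a := ζ - c) (sub_ne_zero.2 hwc)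
          (fun h => hsub ζ hζ (by linear_combination h)) n
    dsimp only
    rw [div_eq_mul_inv, key, mul_sub, mul_sum]
    congr 1
    · rw [div_pow]
      ring
    · exact sum_congr rfl fun m _ => by ring
  rw [circleIntegral.integral_congr hr hexpand, circleIntegral.integral_sub,
    circleIntegral.integral_fun_sum, circleIntegral.integral_const_mul]
  · simp only [circleIntegral.integral_const_mul, div_eq_inv_mul _ ((w - c) ^ _)]
  · exact fun m _ => (continuousOn_const.mul (hpow _)).circleIntegrable hr
  · exact (continuousOn_const.mul ((hpow n).div (by fun_prop) hsub)).circleIntegrable hr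
  · exact (continuousOn_finsetSum _ fun m _ => continuousOn_const.mul (hpow _)).circleIntegrable hr

theorem circleIntegral_div_sub_eq_zero_of_differentiableOn {g : ℂ → ℂ} {c w : ℂ} {r : ℝ}
    (hr : 0 ≤ r) (hg : DifferentiableOn ℂ g (closedBall c r)) (hw : w ∉ closedBall c r) :
    (∮ ζ in C(c, r), g ζ / (ζ - w)) = 0 :=
  have hsub : ∀ ζ ∈ closedBall c r, ζ - w ≠ 0 := fun _ hζ =>
    sub_ne_zero.2 (ne_of_mem_of_not_mem hζ hw)
  DiffContOnCl.circleIntegral_eq_zero hr <|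
    (hg.div (differentiableOn_id.sub_const w) hsub).diffContOnCl_ball subset_rfl

theorem pole_contribution_spectral_representation_general (z₀ : ℂ) (R : ℝ)
    (n : ℕ) (f g : ℂ → ℂ)
    (hg : DifferentiableOn ℂ g (Metric.ball z₀ R))
    (hf : ∀ ζ ∈ Metric.ball z₀ R \ {z₀}, f ζ = g ζ / (ζ - z₀) ^ n)
    (r : ℝ) (hr0 : 0 < r) (hrR : r < R) (w : ℂ) (hw : r < ‖w - z₀‖) :
    (2 * Real.pi * Complex.I)⁻¹ * (∮ ζ in C(z₀, r), f ζ / (ζ - w)) =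
      -∑ m ∈ Finset.Icc 1 n,
        ((2 * Real.pi * Complex.I)⁻¹ * ∮ ζ in C(z₀, r), f ζ * (ζ - z₀) ^ (m - 1)) /
          (w - z₀) ^ m := by
  have hball : closedBall z₀ r ⊆ ball z₀ R := closedBall_subset_ball hrR
  have hsphere : sphere z₀ r ⊆ ball z₀ R \ {z₀} := fun ζ hζ =>
    ⟨hball (sphere_subset_closedBall hζ), ne_of_mem_sphere hζ hr0.ne'⟩
  have hw_out : w ∉ closedBall z₀ r := by simpa [dist_eq_norm] using hw
  have hw_ne : w ≠ z₀ := fun h => hw_out (h ▸ mem_closedBall_self hr0.le)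
  have hfg : EqOn f (fun ζ => g ζ / (ζ - z₀) ^ n) (sphere z₀ r) := fun ζ hζ => hf ζ (hsphere hζ)
  have hpow_ne : ∀ ζ ∈ sphere z₀ r, (ζ - z₀) ^ n ≠ 0 := fun ζ hζ =>
    pow_ne_zero _ (sub_ne_zero.2 (hsphere hζ).2)
  have hfc : ContinuousOn f (sphere z₀ r) :=
    ((hg.continuousOn.mono (hsphere.trans sdiff_subset)).div (by fun_prop) hpow_ne).congr hfg
  have hremainder : (∮ ζ in C(z₀, r), f ζ * (ζ - z₀) ^ n / (ζ - w)) = 0 := by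
    rw [circleIntegral.integral_congr (g := fun ζ => g ζ / (ζ - w)) hr0.le fun ζ hζ => by
      simp only [hfg hζ, div_mul_cancel₀ _ (hpow_ne ζ hζ)]]
    exact circleIntegral_div_sub_eq_zero_of_differentiableOn hr0.le (hg.mono hball) hw_out
  rw [circleIntegral_div_sub_eq_sub_sum hr0.le hfc (fun h => hw_out (sphere_subset_closedBall h))
    hw_ne n, hremainder, zero_div, zero_sub, mul_neg, mul_sum]
  simp_rw [mul_div_assoc]

/-- complex-pole contribution in Theorem 1 of the paper: if `f` has a pole
of order at most `n` at `z₀` (i.e. `f = g/(·−z₀)ⁿ` with `g` holomorphic on `B(z₀,R)`),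
`0 < r < R` and `|w − z₀| > r`, then
`(1/(2πi)) ∮_{|ζ−z₀|=r} f(ζ)/(ζ−w) dζ = −Σ_{m=1}^n Z_m/(w−z₀)^m` with
`Z_m = (1/(2πi)) ∮_{|ζ−z₀|=r} f(ζ)(ζ−z₀)^{m−1} dζ`. -/
theorem pole_contribution_spectral_representation (z₀ : ℂ) (R : ℝ) (hR : 0 < R)
    (n : ℕ) (hn : 1 ≤ n) (f g : ℂ → ℂ)
    (hg : DifferentiableOn ℂ g (Metric.ball z₀ R))
    (hf : ∀ ζ ∈ Metric.ball z₀ R \ {z₀}, f ζ = g ζ / (ζ - z₀) ^ n)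
    (r : ℝ) (hr0 : 0 < r) (hrR : r < R) (w : ℂ) (hw : r < ‖w - z₀‖) :
    (2 * Real.pi * Complex.I)⁻¹ * (∮ ζ in C(z₀, r), f ζ / (ζ - w)) =
      -∑ m ∈ Finset.Icc 1 n,
        ((2 * Real.pi * Complex.I)⁻¹ * ∮ ζ in C(z₀, r), f ζ * (ζ - z₀) ^ (m - 1)) /
          (w - z₀) ^ m :=
  pole_contribution_spectral_representation_general z₀ R n f g hg hf r hr0 hrR w hw
end
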